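/- arXiv:2601.06523 — 3 statements merged into one kernel-verified Lean document; each statement's English description precedes it below -/
import Mathlib

section
/- Let f : X → X be a continuous map of a compact metric space, S a closed subset with f^{-1}(S) ⊆ S, and suppose f has shadowing on B_b(S) for some b > 0. If x ∈ S, y ∈ X \ S and y → x, then x ∈ ∂S. -/
/-!
Suppose `x` were an interior point of `S`, say `ball x r ⊆ S`. Since `f⁻¹(S) ⊆ S`, the map `f`
cannot send a point outside `S` into `S`, so by compactness a point whose image is very close
to `S` lies within `b` of `S`. Follow a fine chain from `y` to `x` backwards: if the chain from
`c i` on stays in `B_b(S)`, shadowing gives a true orbit starting `ε`-close to `c i` and ending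
in `ball x r ⊆ S`; backward invariance puts its starting point in `S`, so `c i` is `ε`-close
to `S` as well. Hence `y = c 0` is `ε`-close to `S` for every small `ε`, contradicting `y ∉ S`.
-/

open Metric Filter Topology Set

variable {X : Type*}

/-- `(c i)_{i=0}^k` is a `δ`-chain of `f` (up to index `k`). -/
def IsDeltaChain [MetricSpace X] (f : X → X) (δ : ℝ) (k : ℕ) (c : ℕ → X) : Prop :=
  ∀ i < k, dist (f (c i)) (c (i + 1)) ≤ δ

/-- `x → y` : for every `δ > 0` there is a `δ`-chain from `x` to `y`. -/
def ChainReach [MetricSpace X] (f : X → X) (x y : X) : Prop :=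
  ∀ δ > 0, ∃ k ≥ 1, ∃ c : ℕ → X, c 0 = x ∧ c k = y ∧ IsDeltaChain f δ k c

/-- The chain recurrent set. -/
def ChainRec [MetricSpace X] (f : X → X) : Set X := {x | ChainReach f x x}

/-- `C` is a chain component of `f`. -/
def IsChainComponent [MetricSpace X] (f : X → X) (C : Set X) : Prop :=
  ∃ x, ChainReach f x x ∧
    C = {y | ChainReach f y y ∧ ChainReach f x y ∧ ChainReach f y x}

/-- A set is chain stable iff points chain-reachable from it stay in it. -/
def ChainStable [MetricSpace X] (f : X → X) (S : Set X) : Prop :=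
  ∀ x ∈ S, ∀ y, ChainReach f x y → y ∈ S

/-- `S` is "initially stable": if `y → x` with `x ∈ S` then `y ∈ S`. -/
def InitialStable [MetricSpace X] (f : X → X) (S : Set X) : Prop :=
  ∀ x ∈ S, ∀ y, ChainReach f y x → y ∈ S

/-- `f` restricted to `Λ` is chain transitive. -/
def ChainTransitiveOn [MetricSpace X] (f : X → X) (Λ : Set X) : Prop :=
  ∀ p ∈ Λ, ∀ q ∈ Λ, ∀ δ > 0, ∃ k ≥ 1, ∃ c : ℕ → X,
    c 0 = p ∧ c k = q ∧ (∀ i ≤ k, c i ∈ Λ) ∧ IsDeltaChain f δ k c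

/-- `f` has shadowing on `S`. -/
def ShadowsOn [MetricSpace X] (f : X → X) (S : Set X) : Prop :=
  ∀ ε > 0, ∃ δ > 0, ∀ (k : ℕ) (c : ℕ → X), (∀ i ≤ k, c i ∈ S) →
    IsDeltaChain f δ k c → ∃ x, ∀ i ≤ k, dist (c i) (f^[i] x) ≤ ε

/-- Iterate of a homeomorphism indexed by `ℤ`. -/
def hIter [TopologicalSpace X] (f : X ≃ₜ X) (i : ℤ) : X → X :=
  if 0 ≤ i then (⇑f)^[i.toNat] else (⇑f.symm)^[(-i).toNat]

/-- A `δ`-limit-pseudo orbit of the homeomorphism `f`. -/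
def IsLimitPseudoOrbit [MetricSpace X] (f : X ≃ₜ X) (δ : ℝ) (ξ : ℤ → X) : Prop :=
  (∀ i : ℤ, dist (f (ξ i)) (ξ (i + 1)) ≤ δ) ∧
  Tendsto (fun i : ℤ => dist (f (ξ i)) (ξ (i + 1))) atBot (nhds 0) ∧
  Tendsto (fun i : ℤ => dist (f (ξ i)) (ξ (i + 1))) atTop (nhds 0)

/-- `f` has L-shadowing on `S`. -/
def LShadowsOn [MetricSpace X] (f : X ≃ₜ X) (S : Set X) : Prop :=
  ∀ ε > 0, ∃ δ > 0, ∀ ξ : ℤ → X, (∀ i : ℤ, ξ i ∈ S) →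
    IsLimitPseudoOrbit f δ ξ →
    ∃ x : X, (∀ i : ℤ, dist (ξ i) (hIter f i x) ≤ ε) ∧
      Tendsto (fun i : ℤ => dist (ξ i) (hIter f i x)) atBot (nhds 0) ∧
      Tendsto (fun i : ℤ => dist (ξ i) (hIter f i x)) atTop (nhds 0)

/-- `f` is expansive on `S`. -/
def ExpansiveOn [MetricSpace X] (f : X ≃ₜ X) (S : Set X) : Prop :=
  ∃ e > 0, ∀ x y : X, (∀ i : ℤ, hIter f i x ∈ S) → (∀ i : ℤ, hIter f i y ∈ S) →
    (∀ i : ℤ, dist (hIter f i x) (hIter f i y) ≤ e) → x = y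

/-- Closed `b`-neighborhood of `S`. -/
def Nbhd [MetricSpace X] (b : ℝ) (S : Set X) : Set X := {x | Metric.infDist x S ≤ b}

/-- Attractor for a continuous map `f`. -/
def IsAttractor [TopologicalSpace X] (f : X → X) (Λ : Set X) : Prop :=
  IsClosed Λ ∧ f '' Λ = Λ ∧
    ∃ U : Set X, IsOpen U ∧ f '' closure U ⊆ U ∧ Λ = ⋂ i : ℕ, f^[i] '' U

/-- `f` is (topologically) mixing. -/
def IsMixing [TopologicalSpace X] (f : X → X) : Prop :=
  ∀ U V : Set X, IsOpen U → IsOpen V → U.Nonempty → V.Nonempty →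
    ∃ j : ℕ, ∀ i ≥ j, (f^[i] '' U ∩ V).Nonempty

/-- The ω-limit set of `x` under `f`. -/
def OmegaSet [TopologicalSpace X] (f : X → X) (x : X) : Set X :=
  {y | ∃ φ : ℕ → ℕ, StrictMono φ ∧ Tendsto (fun j => f^[φ j] x) atTop (nhds y)}

/-- `M` is a minimal set for `f`. -/
def IsMinimalSet [TopologicalSpace X] (f : X → X) (M : Set X) : Prop :=
  M.Nonempty ∧ IsClosed M ∧ f '' M ⊆ M ∧ ∀ x ∈ M, OmegaSet f x = M

lemma mem_of_iterate_mem_of_preimage_subset {f : X → X} {S : Set X} (hinv : f ⁻¹' S ⊆ S)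
    {z : X} (n : ℕ) (h : f^[n] z ∈ S) : z ∈ S := by
  by_contra hz
  exact (MapsTo.iterate (s := Sᶜ) (fun p hp hfp => hp (hinv hfp)) n) hz h

section

variable [MetricSpace X] {f : X → X} {S T : Set X} {b δ δ' ε θ : ℝ} {k : ℕ} {c : ℕ → X}

lemma IsDeltaChain.mono (h : IsDeltaChain f δ k c) (hδ : δ ≤ δ') : IsDeltaChain f δ' k c :=
  fun i hi => (h i hi).trans hδ

lemma IsDeltaChain.drop (h : IsDeltaChain f δ k c) (i : ℕ) :
    IsDeltaChain f δ (k - i) (fun j => c (i + j)) :=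
  fun j hj => h (i + j) (by omega)

lemma ShadowsOn.exists_pos_le (h : ShadowsOn f T) (hε : 0 < ε) {η : ℝ} (hη : 0 < η) :
    ∃ δ > 0, δ ≤ η ∧ ∀ (k : ℕ) (c : ℕ → X), (∀ i ≤ k, c i ∈ T) →
      IsDeltaChain f δ k c → ∃ x, ∀ i ≤ k, dist (c i) (f^[i] x) ≤ ε := by
  obtain ⟨δ, hδ, H⟩ := h ε hε
  exact ⟨min δ η, lt_min hδ hη, min_le_right _ _,
    fun k c hcT hc => H k c hcT (hc.mono (min_le_left _ _))⟩

lemma exists_pos_infDist_lt_of_infDist_apply_lt [CompactSpace X] (hf : Continuous f)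
    (hS : IsClosed S) (hinv : f ⁻¹' S ⊆ S) (hb : 0 < b) :
    ∃ θ > 0, ∀ p, infDist (f p) S < θ → infDist p S < b := by
  rcases S.eq_empty_or_nonempty with rfl | hSne
  · exact ⟨1, one_pos, fun p _ => by simpa using hb⟩
  have hK : IsCompact {p | b ≤ infDist p S} :=
    (isClosed_le continuous_const (continuous_infDist_pt S)).isCompact
  obtain ⟨θ, hθ, hθK⟩ := hK.exists_forall_le' (a := 0)
    ((continuous_infDist_pt S).comp hf).continuousOn fun p hp => by
      have hpS : p ∉ S := fun h => hb.not_ge (by simpa [infDist_zero_of_mem h] using hp)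
      exact (hS.notMem_iff_infDist_pos hSne).1 fun h => hpS (hinv h)
  exact ⟨θ, hθ, fun p hp => lt_of_not_ge fun hpK => (hθK p hpK).not_gt hp⟩

lemma infDist_le_of_shadowed_chain_into_ball (hinv : f ⁻¹' S ⊆ S)
    (hsh : ∀ (k : ℕ) (c : ℕ → X), (∀ i ≤ k, c i ∈ T) →
      IsDeltaChain f δ k c → ∃ x, ∀ i ≤ k, dist (c i) (f^[i] x) ≤ ε)
    {r : ℝ} (hεr : ε < r) (hc : IsDeltaChain f δ k c) (hcT : ∀ i ≤ k, c i ∈ T)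
    (hball : ball (c k) r ⊆ S) : infDist (c 0) S ≤ ε := by
  obtain ⟨z, hz⟩ := hsh k c hcT hc
  have hzS : z ∈ S := mem_of_iterate_mem_of_preimage_subset hinv k <|
    hball <| mem_ball_comm.1 <| (hz k le_rfl).trans_lt hεr
  simpa using (infDist_le_dist_of_mem hzS).trans (hz 0 k.zero_le)

lemma infDist_le_of_chain_into_ball (hinv : f ⁻¹' S ⊆ S)
    (hθ : ∀ p, infDist (f p) S < θ → infDist p S < b) (hε : 0 ≤ ε) (hεb : ε ≤ b)
    (hεθ : ε + δ < θ)
    (hsh : ∀ (k : ℕ) (c : ℕ → X), (∀ i ≤ k, c i ∈ Nbhd b S) →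
      IsDeltaChain f δ k c → ∃ x, ∀ i ≤ k, dist (c i) (f^[i] x) ≤ ε)
    {r : ℝ} (hεr : ε < r) (hc : IsDeltaChain f δ k c) (hball : ball (c k) r ⊆ S) :
    ∀ i ≤ k, infDist (c i) S ≤ ε := by
  suffices ∀ i ≤ k, ∀ l, i ≤ l → l ≤ k → infDist (c l) S ≤ ε from
    fun i hi => this i hi i le_rfl hi
  intro i hi
  induction hi using Nat.decreasingInduction with
  | self =>
    intro l hkl hlk
    rw [le_antisymm hlk hkl, infDist_zero_of_mem (hball (mem_ball_self (hε.trans_lt hεr)))]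
    exact hε
  | of_succ i hik ih =>
    intro l hil hlk
    rcases hil.lt_or_eq with hil | rfl
    · exact ih l hil hlk
    have hfc : infDist (f (c i)) S < θ :=
      calc infDist (f (c i)) S ≤ infDist (c (i + 1)) S + dist (f (c i)) (c (i + 1)) :=
            infDist_le_infDist_add_dist
        _ ≤ ε + δ := add_le_add (ih (i + 1) le_rfl hik) (hc i hik)
        _ < θ := hεθ
    have hNbhd : ∀ j ≤ k - i, c (i + j) ∈ Nbhd b S := by
      rintro (_ | j) hj
      · exact (hθ _ hfc).le
      · exact (ih _ (by omega) (by omega)).trans hεb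
    have hend : c (i + (k - i)) = c k := by rw [Nat.add_sub_cancel' hik.le]
    simpa using infDist_le_of_shadowed_chain_into_ball hinv hsh hεr (hc.drop i) hNbhd
      (hend ▸ hball)

theorem exists_pos_forall_chain_into_ball_infDist_le [CompactSpace X] (hf : Continuous f)
    (hS : IsClosed S) (hinv : f ⁻¹' S ⊆ S) (hb : 0 < b) (hsh : ShadowsOn f (Nbhd b S))
    {r : ℝ} (hr : 0 < r) (hε : 0 < ε) :
    ∃ δ > 0, ∀ (k : ℕ) (c : ℕ → X), IsDeltaChain f δ k c → ball (c k) r ⊆ S →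
      infDist (c 0) S ≤ ε := by
  obtain ⟨θ, hθ, hθS⟩ := exists_pos_infDist_lt_of_infDist_apply_lt hf hS hinv hb
  set ε' := min (min ε (r / 2)) (min b (θ / 2))
  have hε' : 0 < ε' := by positivity
  have hε'ε : ε' ≤ ε := (min_le_left _ _).trans (min_le_left _ _)
  have hε'r : ε' < r := (min_le_left _ _).trans_lt ((min_le_right _ _).trans_lt (half_lt_self hr))
  have hε'b : ε' ≤ b := (min_le_right _ _).trans (min_le_left _ _)
  have hε'θ : ε' ≤ θ / 2 := (min_le_right _ _).trans (min_le_right _ _)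
  obtain ⟨δ, hδ, hδθ, H⟩ := hsh.exists_pos_le hε' (by positivity : 0 < θ / 4)
  exact ⟨δ, hδ, fun k c hc hball => (infDist_le_of_chain_into_ball hinv hθS hε'.le hε'b
    (by linarith) H hε'r hc hball 0 k.zero_le).trans hε'ε⟩

end

theorem stmt4 [MetricSpace X] [CompactSpace X] (f : X → X) (hf : Continuous f)
    (S : Set X) (hS : IsClosed S) (hinv : f ⁻¹' S ⊆ S)
    (b : ℝ) (hb : 0 < b) (hsh : ShadowsOn f (Nbhd b S))
    (x y : X) (hx : x ∈ S) (hy : y ∉ S) (hxy : ChainReach f y x) :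
    x ∈ frontier S := by
  rw [hS.frontier_eq]
  refine ⟨hx, fun hxS => ?_⟩
  obtain ⟨r, hr, hball⟩ := Metric.isOpen_iff.1 isOpen_interior x hxS
  have hyS : 0 < infDist y S := (hS.notMem_iff_infDist_pos ⟨x, hx⟩).1 hy
  obtain ⟨δ, hδ, H⟩ :=
    exists_pos_forall_chain_into_ball_infDist_le hf hS hinv hb hsh hr (half_pos hyS)
  obtain ⟨k, -, c, rfl, rfl, hc⟩ := hxy δ hδ
  linarith [H k c hc (hball.trans interior_subset)]
end

section
/- Let f : X → X be a continuous map of a compact metric space and Λ a closed f-invariant set such that f restricted to Λ is chain transitive; let S be a closed set with Λ ⊆ S and f(S) ⊆ S, and suppose f has shadowing on B_b(S) for some b > 0. If there exist x ∈ Λ and y ∈ X \ S with x → y, then Λ ⊆ ∂S. -/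
/-! If a point `p` of `Λ` were interior to `S`, chain transitivity would give `p → x → y`. Take a fine
chain from `p` to `y`. As long as an initial segment of it stays in `B_b(S)`, shadowing follows it by
an orbit starting near `p`, hence in `S`, so by forward invariance the whole shadowing orbit lies
in `S`, and continuity of `f` keeps the next point of the chain within `b` of `S`. Thus the entire
chain stays in `B_b(S)`, and its shadowing orbit puts `y` arbitrarily close to the closed set `S`,
contradicting `y ∉ S`. -/

open Metric Filter Topology Set

variable {X : Type*}

section

variable [MetricSpace X] {f : X → X}

namespace IsDeltaChain

variable {δ : ℝ} {k₁ k₂ : ℕ} {c₁ c₂ : ℕ → X}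

theorem append (h₁ : IsDeltaChain f δ k₁ c₁) (h₂ : IsDeltaChain f δ k₂ c₂) (h : c₁ k₁ = c₂ 0) :
    IsDeltaChain f δ (k₁ + k₂) (fun i => if i ≤ k₁ then c₁ i else c₂ (i - k₁)) := by
  intro i hi
  dsimp only
  by_cases hik : i < k₁
  · simpa only [if_pos hik.le, if_pos (Nat.succ_le_of_lt hik)] using h₁ i hik
  · have hci : (if i ≤ k₁ then c₁ i else c₂ (i - k₁)) = c₂ (i - k₁) := by
      split_ifs with h'
      · rw [show i = k₁ by omega, h, Nat.sub_self]
      · rfl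
    rw [hci, if_neg (by omega), show i + 1 - k₁ = i - k₁ + 1 by omega]
    exact h₂ (i - k₁) (by omega)

end IsDeltaChain

theorem ChainReach.trans {x y z : X} (hxy : ChainReach f x y) (hyz : ChainReach f y z) :
    ChainReach f x z := by
  intro δ hδ
  obtain ⟨k₁, hk₁, c₁, hc₁0, hc₁k, hc₁⟩ := hxy δ hδ
  obtain ⟨k₂, hk₂, c₂, hc₂0, hc₂k, hc₂⟩ := hyz δ hδ
  refine ⟨k₁ + k₂, by omega, _, ?_, ?_, hc₁.append hc₂ (hc₁k.trans hc₂0.symm)⟩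
  · simpa using hc₁0
  · simpa only [if_neg (show ¬k₁ + k₂ ≤ k₁ by omega), Nat.add_sub_cancel_left] using hc₂k

theorem ChainTransitiveOn.chainReach {Λ : Set X} (h : ChainTransitiveOn f Λ) {p q : X}
    (hp : p ∈ Λ) (hq : q ∈ Λ) : ChainReach f p q := fun δ hδ =>
  let ⟨k, hk, c, hc0, hck, _, hc⟩ := h p hp q hq δ hδ
  ⟨k, hk, c, hc0, hck, hc⟩

variable {S : Set X} {b : ℝ}

theorem mem_nbhd_of_mem (hb : 0 ≤ b) {x : X} (hx : x ∈ S) : x ∈ Nbhd b S := by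
  show infDist x S ≤ b
  rwa [infDist_zero_of_mem hx]

theorem IsDeltaChain.forall_mem_nbhd {ε δ : ℝ} {k : ℕ} {c : ℕ → X} (hS : MapsTo f S S)
    (hfε : ∀ a a', dist a a' ≤ ε → dist (f a) (f a') ≤ b - δ) (hc : IsDeltaChain f δ k c)
    (hc0 : c 0 ∈ Nbhd b S)
    (hshadow : ∀ j ≤ k, (∀ i ≤ j, c i ∈ Nbhd b S) →
      ∃ z ∈ S, ∀ i ≤ j, dist (c i) (f^[i] z) ≤ ε) :
    ∀ i ≤ k, c i ∈ Nbhd b S := by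
  suffices ∀ j ≤ k, ∀ i ≤ j, c i ∈ Nbhd b S from this k le_rfl
  intro j
  induction j with
  | zero => intro _ i hi; rwa [Nat.le_zero.1 hi]
  | succ j ih =>
    intro hj i hi
    have hprefix := ih (by omega)
    rcases Nat.le_succ_iff.1 hi with hi | rfl
    · exact hprefix i hi
    obtain ⟨z, hz, hzc⟩ := hshadow j (by omega) hprefix
    have hzj : f (f^[j] z) ∈ S := hS (hS.iterate j hz)
    calc infDist (c (j + 1)) S ≤ dist (c (j + 1)) (f (f^[j] z)) := infDist_le_dist_of_mem hzj
      _ ≤ dist (f (c j)) (c (j + 1)) + dist (f (c j)) (f (f^[j] z)) := dist_triangle_left _ _ _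
      _ ≤ δ + (b - δ) := add_le_add (hc j (by omega)) (hfε _ _ (hzc j le_rfl))
      _ = b := by ring

theorem mem_of_chainReach_of_mem_interior [CompactSpace X] (hf : Continuous f)
    (hSc : IsClosed S) (hS : MapsTo f S S) (hb : 0 < b) (hsh : ShadowsOn f (Nbhd b S))
    {p y : X} (hp : p ∈ interior S) (hpy : ChainReach f p y) : y ∈ S := by
  by_contra hy
  have hyS : 0 < infDist y S := (hSc.notMem_iff_infDist_pos ⟨p, interior_subset hp⟩).1 hy
  obtain ⟨r, hr, hrS⟩ := nhds_basis_closedBall.mem_iff.1 (mem_interior_iff_mem_nhds.1 hp)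
  obtain ⟨η, hη, hηf⟩ := uniformContinuous_iff.1
    (CompactSpace.uniformContinuous_of_continuous hf) (b / 2) (half_pos hb)
  set ε := min r (min (infDist y S / 2) (η / 2))
  have hε : 0 < ε := lt_min hr (lt_min (half_pos hyS) (half_pos hη))
  obtain ⟨δ₀, hδ₀, hδ₀sh⟩ := hsh ε hε
  set δ := min δ₀ (b / 2)
  obtain ⟨k, -, c, hc0, hck, hc⟩ := hpy δ (lt_min hδ₀ (half_pos hb))
  have hshadow : ∀ j ≤ k, (∀ i ≤ j, c i ∈ Nbhd b S) →
      ∃ z ∈ S, ∀ i ≤ j, dist (c i) (f^[i] z) ≤ ε := by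
    intro j hj hcj
    obtain ⟨z, hz⟩ := hδ₀sh j c hcj fun i hi => (hc i (by omega)).trans (min_le_left _ _)
    have hpz : dist z p ≤ r := by
      simpa [hc0, dist_comm] using (hz 0 (Nat.zero_le _)).trans (min_le_left _ _)
    exact ⟨z, hrS hpz, hz⟩
  have hεη : ε < η := (min_le_right _ _).trans_lt ((min_le_right _ _).trans_lt (half_lt_self hη))
  have hfε : ∀ a a', dist a a' ≤ ε → dist (f a) (f a') ≤ b - δ := fun a a' h => by
    linarith [hηf (h.trans_lt hεη), min_le_right δ₀ (b / 2)]
  have hall := hc.forall_mem_nbhd hS hfε (hc0 ▸ mem_nbhd_of_mem hb.le (interior_subset hp))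
    hshadow
  obtain ⟨z, hz, hzc⟩ := hshadow k le_rfl hall
  have hyz : dist y (f^[k] z) ≤ ε := hck ▸ hzc k le_rfl
  have hεy : ε ≤ infDist y S / 2 := (min_le_right _ _).trans (min_le_left _ _)
  linarith [infDist_le_dist_of_mem (x := y) (hS.iterate k hz)]

end

theorem stmt5_general [MetricSpace X] [CompactSpace X] (f : X → X) (hf : Continuous f)
    (Λ : Set X)
    (hct : ChainTransitiveOn f Λ)
    (S : Set X) (hSc : IsClosed S) (hΛS : Λ ⊆ S) (hSinv : f '' S ⊆ S)
    (b : ℝ) (hb : 0 < b) (hsh : ShadowsOn f (Nbhd b S))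
    (x y : X) (hx : x ∈ Λ) (hy : y ∉ S) (hxy : ChainReach f x y) :
    Λ ⊆ frontier S := by
  intro p hp
  refine ⟨subset_closure (hΛS hp), fun hpS => hy ?_⟩
  exact mem_of_chainReach_of_mem_interior hf hSc (mapsTo_iff_image_subset.2 hSinv) hb hsh hpS
    ((hct.chainReach hp hx).trans hxy)

theorem stmt5 [MetricSpace X] [CompactSpace X] (f : X → X) (hf : Continuous f)
    (Λ : Set X) (hΛc : IsClosed Λ) (hΛinv : f '' Λ ⊆ Λ)
    (hct : ChainTransitiveOn f Λ)
    (S : Set X) (hSc : IsClosed S) (hΛS : Λ ⊆ S) (hSinv : f '' S ⊆ S)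
    (b : ℝ) (hb : 0 < b) (hsh : ShadowsOn f (Nbhd b S))
    (x y : X) (hx : x ∈ Λ) (hy : y ∉ S) (hxy : ChainReach f x y) :
    Λ ⊆ frontier S :=
  stmt5_general f hf Λ hct S hSc hΛS hSinv b hb hsh x y hx hy hxy
end

section
/- Let f : X → X be a homeomorphism of a compact metric space and C a chain component of f. If C is both an initial and a terminal chain component and C is clopen in CR(f), then C is clopen in X. -/
open Metric Filter Topology Set

variable {X : Type*}

/-!
The chain relation `x → y` is closed in `X × X`. Every point `y` chain-reaches each point of its
ω-limit set, which is nonempty and lies in `CR(f)`. If `y ∉ C`, such an ω-limit point is not in `C`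
either, since `C` is initial; so `y` reaches `K = CR(f) \ C`, which is closed because `C` is open in
`CR(f)`. Conversely no point of `C` reaches `K`, since `C` is terminal. Hence `Cᶜ` is the set of
points reaching `K`, which is closed by compactness of `X` and closedness of the chain relation.
Closedness of `C` itself is again closedness of the chain relation.
-/

/-- `ChainReach f x y` is definitionally `∀ δ > 0, DeltaChainReach f δ x y`. -/
def DeltaChainReach [MetricSpace X] (f : X → X) (δ : ℝ) (x y : X) : Prop :=
  ∃ k ≥ 1, ∃ c : ℕ → X, c 0 = x ∧ c k = y ∧ IsDeltaChain f δ k c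

section

variable [MetricSpace X] {f : X → X}

lemma deltaChainReach_iterate {δ : ℝ} (hδ : 0 ≤ δ) (x : X) {n : ℕ} (hn : 1 ≤ n) :
    DeltaChainReach f δ x (f^[n] x) :=
  ⟨n, hn, fun i => f^[i] x, rfl, rfl, fun i _ => by simp [Function.iterate_succ_apply', hδ]⟩

lemma DeltaChainReach.perturb {δ ε₁ ε₂ : ℝ} {a b x y : X} (h : DeltaChainReach f δ a b)
    (hx : dist (f x) (f a) ≤ ε₁) (hy : dist b y ≤ ε₂) :
    DeltaChainReach f (ε₁ + δ + ε₂) x y := by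
  obtain ⟨k, hk, c, rfl, rfl, hc⟩ := h
  have hk0 : 0 ≠ k := by omega
  set c' := Function.update (Function.update c 0 x) k y
  refine ⟨k, hk, c', by simp [c', hk0], by simp [c'], fun i hi => ?_⟩
  have hstart : dist (f (c' i)) (f (c i)) ≤ ε₁ := by
    rcases eq_or_ne i 0 with rfl | hi0
    · simpa [c', hk0] using hx
    · simp [c', hi0, hi.ne, dist_nonneg.trans hx]
  have hend : dist (c (i + 1)) (c' (i + 1)) ≤ ε₂ := by
    rcases eq_or_ne (i + 1) k with hik | hik
    · simpa [c', ← hik] using hy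
    · simp [c', hik, dist_nonneg.trans hy]
  calc dist (f (c' i)) (c' (i + 1))
      ≤ dist (f (c' i)) (f (c i)) + dist (f (c i)) (c (i + 1)) + dist (c (i + 1)) (c' (i + 1)) :=
        dist_triangle4 _ _ _ _
    _ ≤ ε₁ + δ + ε₂ := add_le_add (add_le_add hstart (hc i hi)) hend

theorem isClosed_setOf_chainReach (hf : Continuous f) :
    IsClosed {p : X × X | ChainReach f p.1 p.2} := by
  refine isClosed_of_closure_subset fun ⟨x, y⟩ hxy δ hδ => ?_
  have hδ3 : 0 < δ / 3 := by positivity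
  obtain ⟨η, hη, hfx⟩ := Metric.continuousAt_iff.mp hf.continuousAt (δ / 3) hδ3
  obtain ⟨⟨a, b⟩, hab, hdist⟩ := Metric.mem_closure_iff.mp hxy (min η (δ / 3)) (lt_min hη hδ3)
  rw [Prod.dist_eq, max_lt_iff, lt_min_iff, lt_min_iff] at hdist
  have hab' : DeltaChainReach f (δ / 3) a b := hab (δ / 3) hδ3
  have hxa : dist (f x) (f a) ≤ δ / 3 := by
    rw [dist_comm]; exact (hfx (by rw [dist_comm]; exact hdist.1.1)).le
  have hby : dist b y ≤ δ / 3 := by rw [dist_comm]; exact hdist.2.2.le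
  have hchain := hab'.perturb hxa hby
  rw [show δ / 3 + δ / 3 + δ / 3 = δ by ring] at hchain
  exact hchain

theorem isClosed_chainRec (hf : Continuous f) : IsClosed (ChainRec f) :=
  (isClosed_setOf_chainReach hf).preimage (continuous_id.prodMk continuous_id)

theorem IsChainComponent.isClosed (hf : Continuous f) {C : Set X}
    (hC : IsChainComponent f C) : IsClosed C := by
  obtain ⟨x, -, rfl⟩ := hC
  have hR := isClosed_setOf_chainReach hf
  exact (hR.preimage (continuous_id.prodMk continuous_id)).inter
    ((hR.preimage (continuous_const.prodMk continuous_id)).inter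
      (hR.preimage (continuous_id.prodMk continuous_const)))

variable (f) in
lemma omegaSet_nonempty [CompactSpace X] (x : X) : (OmegaSet f x).Nonempty := by
  obtain ⟨z, -, φ, hφ, hz⟩ :=
    isCompact_univ.tendsto_subseq (x := fun n => f^[n] x) fun _ => mem_univ _
  exact ⟨z, φ, hφ, hz⟩

lemma chainReach_iterate_of_mem_omegaSet {x z : X} (hz : z ∈ OmegaSet f x) (m : ℕ) :
    ChainReach f (f^[m] x) z := by
  obtain ⟨φ, hφ, hlim⟩ := hz
  intro δ hδ
  obtain ⟨j, hj, hjm⟩ := ((hlim.eventually (ball_mem_nhds z hδ)).and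
    (hφ.tendsto_atTop.eventually_gt_atTop m)).exists
  have horbit := deltaChainReach_iterate (f := f) le_rfl (f^[m] x) (n := φ j - m) (by omega)
  rw [← Function.iterate_add_apply, Nat.sub_add_cancel hjm.le] at horbit
  have hchain := horbit.perturb (dist_self _).le (mem_ball.mp hj).le
  rwa [zero_add, zero_add] at hchain

lemma mem_chainRec_of_mem_omegaSet (hf : Continuous f) {x z : X} (hz : z ∈ OmegaSet f x) :
    z ∈ ChainRec f := by
  obtain ⟨φ, -, hlim⟩ := id hz
  exact (isClosed_setOf_chainReach hf).mem_of_tendsto (hlim.prodMk_nhds tendsto_const_nhds)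
    (Eventually.of_forall fun j => chainReach_iterate_of_mem_omegaSet hz (φ j))

theorem isClosed_setOf_exists_chainReach [CompactSpace X] (hf : Continuous f) {K : Set X}
    (hK : IsClosed K) : IsClosed {y | ∃ z ∈ K, ChainReach f y z} := by
  have hproj : {y | ∃ z ∈ K, ChainReach f y z} =
      Prod.fst '' ({p : X × X | ChainReach f p.1 p.2} ∩ Prod.snd ⁻¹' K) := by
    ext y
    simp [and_comm]
  rw [hproj]
  exact isClosedMap_fst_of_compactSpace _
    ((isClosed_setOf_chainReach hf).inter (hK.preimage continuous_snd))

theorem isOpen_of_chainStable_of_initialStable [CompactSpace X] (hf : Continuous f) {C : Set X}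
    (hter : ChainStable f C) (hini : InitialStable f C)
    (hopen : IsOpen {x : ChainRec f | (x : X) ∈ C}) : IsOpen C := by
  obtain ⟨U, hU, hUC⟩ := isOpen_induced_iff.mp hopen
  have hmem : ∀ z ∈ ChainRec f, z ∈ U ↔ z ∈ C := fun z hz => Set.ext_iff.mp hUC ⟨z, hz⟩
  have hcompl : C = {y | ∃ z ∈ ChainRec f \ U, ChainReach f y z}ᶜ := by
    ext y
    refine ⟨fun hy ⟨z, ⟨hzR, hzU⟩, hyz⟩ => hzU ((hmem z hzR).mpr (hter y hy z hyz)), fun hy => ?_⟩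
    by_contra hyC
    obtain ⟨z, hz⟩ := omegaSet_nonempty f y
    have hyz : ChainReach f y z := chainReach_iterate_of_mem_omegaSet hz 0
    have hzR := mem_chainRec_of_mem_omegaSet hf hz
    exact hy ⟨z, ⟨hzR, fun hzU => hyC (hini z ((hmem z hzR).mp hzU) y hyz)⟩, hyz⟩
  rw [hcompl]
  exact (isClosed_setOf_exists_chainReach hf ((isClosed_chainRec hf).sdiff hU)).isOpen_compl

end

theorem stmt8 [MetricSpace X] [CompactSpace X] (f : X ≃ₜ X)
    (C : Set X) (hC : IsChainComponent (⇑f) C)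
    (hter : ChainStable (⇑f) C) (hini : InitialStable (⇑f) C)
    (hclopen : IsClopen {x : ChainRec (⇑f) | (x : X) ∈ C}) :
    IsClopen C :=
  ⟨hC.isClosed f.continuous,
    isOpen_of_chainStable_of_initialStable f.continuous hter hini hclopen.isOpen⟩
end
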